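/- (Gyrocircle interior, exterior and membership criterion.) With the setup of the Point to Circumgyrocenter Gyrodistance theorem — A1, A2, A3 ∈ 𝔹 pairwise distinct and not collinear with circumgyrocenter O ∈ 𝔹 and circumgyroradius R; A = (w1·γ_{A1}·A1 + w2·γ_{A2}·A2 + w3·γ_{A3}·A3)/W ∈ 𝔹 with M = w1 + w2 + w3 ≠ 0, W ≠ 0; K = w1w2(γ12 − 1) + w1w3(γ13 − 1) + w2w3(γ23 − 1) — one has: ‖⊖A ⊕ O‖ = R if and only if K = 0; ‖⊖A ⊕ O‖ < R if and only if K > 0; and ‖⊖A ⊕ O‖ > R if and only if K < 0. That is, A lies on, inside, or outside the circumgyrocircle of gyrotriangle A1A2A3 according as K = 0, K > 0, or K < 0. -/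

import Mathlib

/-!
Write `B(u, v) = 1 - ⟪u, v⟫ / s²`. The gamma identity `γ(⊖u ⊕ v) = γ_u γ_v B(u, v)` turns
gyrodistances into values of `B`, which is affine in each argument. Hence a point `A` with
gyrobarycentric coordinates `w` (and `W = ∑ wᵢ γ_{Aᵢ}`) satisfies
`W γ_X B(A, X) = ∑ wᵢ γ(⊖Aᵢ ⊕ X)` and `W² / γ_A² = ∑ᵢⱼ wᵢ wⱼ γᵢⱼ`, so that
`(∑ wᵢ γ(⊖Aᵢ ⊕ X))² / γ(⊖A ⊕ X)² = ∑ᵢⱼ wᵢ wⱼ γᵢⱼ`.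
The weights `m` of the circumgyrocenter `O` make `∑ⱼ mⱼ γⱼₖ` independent of `k`, so by the first
identity all `γ(⊖Aₖ ⊕ O)` agree. With `d = ‖⊖A ⊕ O‖`, the second identity at `X = O` reads
`(1 - d²/s²) M² = (M² + 2K)(1 - R²/s²)`, i.e. `(R² - d²) M² = 2K (s² - R²)`.
-/

open RealInnerProductSpace

/-- Lorentz gamma factor of a vector `v` in the `s`-ball of `ℝⁿ`. -/
noncomputable def egamma {n : ℕ} (s : ℝ) (v : EuclideanSpace ℝ (Fin n)) : ℝ :=
  1 / Real.sqrt (1 - ‖v‖ ^ 2 / s ^ 2)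

/-- Einstein addition on the `s`-ball of `ℝⁿ`. -/
noncomputable def eadd {n : ℕ} (s : ℝ) (u v : EuclideanSpace ℝ (Fin n)) :
    EuclideanSpace ℝ (Fin n) :=
  (1 / (1 + ⟪u, v⟫ / s ^ 2)) •
    (u + (1 / egamma s u) • v + (egamma s u / (s ^ 2 * (1 + egamma s u))) • ⟪u, v⟫ • u)

/-- Gyroangle at vertex `X` between points `Y` and `Z`. -/
noncomputable def gyroangle {n : ℕ} (s : ℝ) (X Y Z : EuclideanSpace ℝ (Fin n)) : ℝ :=
  Real.arccos ⟪‖eadd s (-X) Y‖⁻¹ • eadd s (-X) Y, ‖eadd s (-X) Z‖⁻¹ • eadd s (-X) Z⟫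

/-- Gamma factor of a real gyrodistance `d`. -/
noncomputable def gammaR (s d : ℝ) : ℝ := 1 / Real.sqrt (1 - d ^ 2 / s ^ 2)

section InnerProductSpace

variable {E : Type*} [NormedAddCommGroup E] [InnerProductSpace ℝ E] {s : ℝ}

lemma real_inner_lt_sq {u v : E} (hu : ‖u‖ < s) (hv : ‖v‖ < s) : ⟪u, v⟫ < s ^ 2 := calc
  ⟪u, v⟫ ≤ ‖u‖ * ‖v‖ := real_inner_le_norm u v
  _ < s * s := mul_lt_mul'' hu hv (norm_nonneg u) (norm_nonneg v)
  _ = s ^ 2 := (sq s).symm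

lemma one_sub_inner_div_sq_pos {u v : E} (hu : ‖u‖ < s) (hv : ‖v‖ < s) :
    0 < 1 - ⟪u, v⟫ / s ^ 2 := by
  have hs : 0 < s := (norm_nonneg u).trans_lt hu
  rw [sub_pos, div_lt_one (by positivity)]
  exact real_inner_lt_sq hu hv

lemma one_sub_norm_sq_div_sq_pos {u : E} (hu : ‖u‖ < s) : 0 < 1 - ‖u‖ ^ 2 / s ^ 2 := by
  simpa only [real_inner_self_eq_norm_sq] using one_sub_inner_div_sq_pos hu hu

variable {ι : Type*} [Fintype ι]

lemma sum_mul_one_sub_inner_div_sq {a : ι → ℝ} {p : ι → E} {A : E}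
    (hA : (∑ i, a i) • A = ∑ i, a i • p i) (X : E) :
    (∑ i, a i) * (1 - ⟪A, X⟫ / s ^ 2) = ∑ i, a i * (1 - ⟪p i, X⟫ / s ^ 2) := by
  have h := congrArg (⟪·, X⟫) hA
  simp only [real_inner_smul_left, sum_inner] at h
  simp only [mul_sub, mul_one, Finset.sum_sub_distrib, ← Finset.sum_div, mul_div_assoc', h]

lemma sq_sum_mul_one_sub_norm_sq_div_sq {a : ι → ℝ} {p : ι → E} {A : E}
    (hA : (∑ i, a i) • A = ∑ i, a i • p i) :
    (∑ i, a i) ^ 2 * (1 - ‖A‖ ^ 2 / s ^ 2) =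
      ∑ i, ∑ j, a i * a j * (1 - ⟪p i, p j⟫ / s ^ 2) := by
  rw [← real_inner_self_eq_norm_sq, sq, mul_assoc, sum_mul_one_sub_inner_div_sq hA,
    Finset.mul_sum]
  refine Finset.sum_congr rfl fun i _ => ?_
  rw [real_inner_comm, mul_left_comm, sum_mul_one_sub_inner_div_sq hA, Finset.mul_sum]
  simp only [real_inner_comm (p i), mul_assoc]

end InnerProductSpace

lemma sign_sub_eq_sign_of_sq_sub_mul_eq {R d a b x : ℝ} (hR : 0 ≤ R) (hd : 0 ≤ d) (ha : 0 < a)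
    (hb : 0 < b) (h : (R ^ 2 - d ^ 2) * a = x * b) : SignType.sign (R - d) = SignType.sign x := by
  rcases lt_trichotomy d R with hdR | rfl | hRd
  · have : 0 < x * b := h ▸ mul_pos (by nlinarith) ha
    rw [sign_pos (sub_pos.mpr hdR), sign_pos (pos_of_mul_pos_left this hb.le)]
  · have : x * b = 0 := by rw [← h]; ring
    rw [sub_self, (mul_eq_zero.mp this).resolve_right hb.ne']
  · have : x * b < 0 := h ▸ mul_neg_of_neg_of_pos (by nlinarith) ha
    rw [sign_neg (sub_neg.mpr hRd), sign_neg (neg_of_mul_neg_left this hb.le)]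

lemma eq_iff_and_lt_iff_and_gt_iff_of_sign_sub_eq {R d x : ℝ}
    (h : SignType.sign (R - d) = SignType.sign x) :
    (d = R ↔ x = 0) ∧ (d < R ↔ x > 0) ∧ (d > R ↔ x < 0) := by
  refine ⟨?_, ?_, ?_⟩
  · rw [eq_comm, ← sub_eq_zero, ← sign_eq_zero_iff, h, sign_eq_zero_iff]
  · rw [← sub_pos, ← sign_eq_one_iff, h, sign_eq_one_iff]
  · rw [gt_iff_lt, ← sub_neg, ← sign_eq_neg_one_iff, h, sign_eq_neg_one_iff]

section Einstein

variable {n : ℕ} {s : ℝ} {u v : EuclideanSpace ℝ (Fin n)}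

lemma egamma_pos (hu : ‖u‖ < s) : 0 < egamma s u := by
  have := one_sub_norm_sq_div_sq_pos hu
  rw [egamma]; positivity

lemma egamma_sq_mul (hu : ‖u‖ < s) : egamma s u ^ 2 * (1 - ‖u‖ ^ 2 / s ^ 2) = 1 := by
  have h := one_sub_norm_sq_div_sq_pos hu
  rw [egamma, div_pow, one_pow, Real.sq_sqrt h.le, one_div, inv_mul_cancel₀ h.ne']

lemma norm_eq_of_egamma_eq (hu : ‖u‖ < s) (hv : ‖v‖ < s) (h : egamma s u = egamma s v) :
    ‖u‖ = ‖v‖ := by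
  have hs : s ≠ 0 := ((norm_nonneg u).trans_lt hu).ne'
  have hγ := (egamma_pos hv).ne'
  have huv := (egamma_sq_mul hu).trans (egamma_sq_mul hv).symm
  rw [h] at huv
  field_simp at huv
  exact (sq_eq_sq₀ (norm_nonneg u) (norm_nonneg v)).mp (by linarith)

lemma eadd_neg_eq (s : ℝ) (u v : EuclideanSpace ℝ (Fin n)) :
    eadd s (-u) v = (1 - ⟪u, v⟫ / s ^ 2)⁻¹ •
      ((egamma s u * ⟪u, v⟫ / (s ^ 2 * (1 + egamma s u)) - 1) • u + (egamma s u)⁻¹ • v) := by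
  have hγ : egamma s (-u) = egamma s u := by rw [egamma, egamma, norm_neg]
  rw [eadd, hγ, inner_neg_left]
  match_scalars <;> ring

lemma one_sub_norm_eadd_neg_sq_div_sq (hu : ‖u‖ < s) (hv : ‖v‖ < s) :
    1 - ‖eadd s (-u) v‖ ^ 2 / s ^ 2 =
      (1 - ‖u‖ ^ 2 / s ^ 2) * (1 - ‖v‖ ^ 2 / s ^ 2) / (1 - ⟪u, v⟫ / s ^ 2) ^ 2 := by
  have hs : s ≠ 0 := ((norm_nonneg u).trans_lt hu).ne'
  have hγ := egamma_pos hu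
  have huv : s ^ 2 - ⟪u, v⟫ ≠ 0 := (sub_pos.mpr (real_inner_lt_sq hu hv)).ne'
  have hu2 : ‖u‖ ^ 2 = s ^ 2 * (egamma s u ^ 2 - 1) / egamma s u ^ 2 := by
    rw [eq_div_iff (by positivity)]
    have := egamma_sq_mul hu
    field_simp at this
    linear_combination -this
  rw [eadd_neg_eq, norm_smul, mul_pow, norm_add_sq_real, norm_smul, norm_smul,
    real_inner_smul_left, real_inner_smul_right]
  simp only [mul_pow, Real.norm_eq_abs, abs_inv, inv_pow, sq_abs]
  rw [hu2]
  field_simp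
  ring

lemma norm_eadd_neg_lt (hu : ‖u‖ < s) (hv : ‖v‖ < s) : ‖eadd s (-u) v‖ < s := by
  have hs : 0 < s := (norm_nonneg u).trans_lt hu
  have h : 0 < 1 - ‖eadd s (-u) v‖ ^ 2 / s ^ 2 := by
    have := one_sub_norm_sq_div_sq_pos hu
    have := one_sub_norm_sq_div_sq_pos hv
    have := one_sub_inner_div_sq_pos hu hv
    rw [one_sub_norm_eadd_neg_sq_div_sq hu hv]
    positivity
  rw [sub_pos, div_lt_one (by positivity)] at h
  exact (pow_lt_pow_iff_left₀ (norm_nonneg _) hs.le two_ne_zero).mp h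

lemma egamma_eadd_neg (hu : ‖u‖ < s) (hv : ‖v‖ < s) :
    egamma s (eadd s (-u) v) = egamma s u * egamma s v * (1 - ⟪u, v⟫ / s ^ 2) := by
  have hτ := one_sub_inner_div_sq_pos hu hv
  have h := egamma_sq_mul (norm_eadd_neg_lt hu hv)
  rw [one_sub_norm_eadd_neg_sq_div_sq hu hv, mul_div_assoc', div_eq_one_iff_eq (by positivity)]
    at h
  refine (sq_eq_sq₀ (egamma_pos (norm_eadd_neg_lt hu hv)).le
    (by have := egamma_pos hu; have := egamma_pos hv; positivity)).mp ?_
  linear_combination egamma s u ^ 2 * egamma s v ^ 2 * h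
    - egamma s (eadd s (-u) v) ^ 2 * egamma_sq_mul hu
    - egamma s (eadd s (-u) v) ^ 2 * egamma s u ^ 2 * (1 - ‖u‖ ^ 2 / s ^ 2) * egamma_sq_mul hv

lemma egamma_eadd_neg_comm (hu : ‖u‖ < s) (hv : ‖v‖ < s) :
    egamma s (eadd s (-u) v) = egamma s (eadd s (-v) u) := by
  rw [egamma_eadd_neg hu hv, egamma_eadd_neg hv hu, real_inner_comm, mul_comm (egamma s u)]

lemma egamma_eadd_neg_self (hu : ‖u‖ < s) : egamma s (eadd s (-u) u) = 1 := by
  rw [egamma_eadd_neg hu hu, real_inner_self_eq_norm_sq, ← sq, egamma_sq_mul hu]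

end Einstein

section Gyrobarycentric

variable {ι : Type*} [Fintype ι] {n : ℕ}

def HasGyrobarycentricCoords (s : ℝ) (p : ι → EuclideanSpace ℝ (Fin n)) (w : ι → ℝ)
    (A : EuclideanSpace ℝ (Fin n)) : Prop :=
  (∑ i, w i * egamma s (p i)) • A = ∑ i, (w i * egamma s (p i)) • p i

namespace HasGyrobarycentricCoords

variable {s : ℝ} {p : ι → EuclideanSpace ℝ (Fin n)} {w : ι → ℝ}
  {A O X : EuclideanSpace ℝ (Fin n)}

lemma sum_mul_egamma_mul_one_sub_inner (hA : HasGyrobarycentricCoords s p w A)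
    (hp : ∀ i, ‖p i‖ < s) (hX : ‖X‖ < s) :
    (∑ i, w i * egamma s (p i)) * (egamma s X * (1 - ⟪A, X⟫ / s ^ 2)) =
      ∑ i, w i * egamma s (eadd s (-p i) X) := by
  rw [mul_left_comm, sum_mul_one_sub_inner_div_sq hA, Finset.mul_sum]
  refine Finset.sum_congr rfl fun i _ => ?_
  rw [egamma_eadd_neg (hp i) hX]
  ring

lemma sq_sum_mul_egamma_mul_one_sub_norm_sq (hA : HasGyrobarycentricCoords s p w A)
    (hp : ∀ i, ‖p i‖ < s) :
    (∑ i, w i * egamma s (p i)) ^ 2 * (1 - ‖A‖ ^ 2 / s ^ 2) =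
      ∑ i, ∑ j, w i * w j * egamma s (eadd s (-p i) (p j)) := by
  rw [sq_sum_mul_one_sub_norm_sq_div_sq hA]
  refine Finset.sum_congr rfl fun i _ => Finset.sum_congr rfl fun j _ => ?_
  rw [egamma_eadd_neg (hp i) (hp j)]
  ring

lemma one_sub_norm_eadd_neg_sq_div_sq_mul (hA : HasGyrobarycentricCoords s p w A)
    (hp : ∀ i, ‖p i‖ < s) (hA' : ‖A‖ < s) (hX : ‖X‖ < s) :
    (1 - ‖eadd s (-A) X‖ ^ 2 / s ^ 2) * (∑ i, w i * egamma s (eadd s (-p i) X)) ^ 2 =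
      ∑ i, ∑ j, w i * w j * egamma s (eadd s (-p i) (p j)) := by
  have hτ := one_sub_inner_div_sq_pos hA' hX
  rw [← hA.sum_mul_egamma_mul_one_sub_inner hp hX, ← hA.sq_sum_mul_egamma_mul_one_sub_norm_sq hp,
    one_sub_norm_eadd_neg_sq_div_sq hA' hX, div_mul_eq_mul_div, div_eq_iff (by positivity)]
  linear_combination (∑ i, w i * egamma s (p i)) ^ 2 * (1 - ‖A‖ ^ 2 / s ^ 2) *
    (1 - ⟪A, X⟫ / s ^ 2) ^ 2 * egamma_sq_mul hX


lemma norm_eadd_neg_eq_of_forall_sum_eq (hO : HasGyrobarycentricCoords s p w O)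
    (hp : ∀ i, ‖p i‖ < s) (hO' : ‖O‖ < s) (hW : ∑ i, w i * egamma s (p i) ≠ 0) {S : ℝ}
    (hS : ∀ k, ∑ j, w j * egamma s (eadd s (-p j) (p k)) = S) (k l : ι) :
    ‖eadd s (-p k) O‖ = ‖eadd s (-p l) O‖ := by
  have hγ : ∀ k, egamma s (eadd s (-p k) O) = egamma s O * S / ∑ i, w i * egamma s (p i) := by
    intro k
    have h := hO.sum_mul_egamma_mul_one_sub_inner hp (hp k)
    rw [hS, real_inner_comm] at h
    rw [egamma_eadd_neg (hp k) hO', eq_div_iff hW, ← h]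
    ring
  exact norm_eq_of_egamma_eq (norm_eadd_neg_lt (hp k) hO') (norm_eadd_neg_lt (hp l) hO')
    ((hγ k).trans (hγ l).symm)

lemma sign_sub_norm_eadd_neg (hA : HasGyrobarycentricCoords s p w A) (hp : ∀ i, ‖p i‖ < s)
    (hA' : ‖A‖ < s) (hO' : ‖O‖ < s) (hM : ∑ i, w i ≠ 0) {R : ℝ}
    (hR : ∀ i, ‖eadd s (-p i) O‖ = R) :
    SignType.sign (R - ‖eadd s (-A) O‖) =
      SignType.sign (∑ i, ∑ j, w i * w j * (egamma s (eadd s (-p i) (p j)) - 1)) := by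
  obtain ⟨i₀, -, -⟩ := Finset.exists_ne_zero_of_sum_ne_zero hM
  have hR₀ : 0 ≤ R := hR i₀ ▸ norm_nonneg _
  have hRs : R < s := hR i₀ ▸ norm_eadd_neg_lt (hp i₀) hO'
  have hs : 0 < s := hR₀.trans_lt hRs
  set g := egamma s (eadd s (-p i₀) O)
  have hg : ∀ i, egamma s (eadd s (-p i) O) = g := fun i => by
    simp only [g, egamma, hR]
  have hgR : g ^ 2 * (s ^ 2 - R ^ 2) = s ^ 2 := by
    have h := hR i₀ ▸ egamma_sq_mul (norm_eadd_neg_lt (hp i₀) hO')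
    field_simp at h
    exact h
  have hd := hA.one_sub_norm_eadd_neg_sq_div_sq_mul hp hA' hO'
  simp only [hg, ← Finset.sum_mul] at hd
  field_simp at hd
  have hQ : ∑ i, ∑ j, w i * w j * (egamma s (eadd s (-p i) (p j)) - 1) =
      ∑ i, ∑ j, w i * w j * egamma s (eadd s (-p i) (p j)) - (∑ i, w i) ^ 2 := by
    simp only [mul_sub, mul_one, Finset.sum_sub_distrib, sq, Finset.sum_mul_sum]
  refine sign_sub_eq_sign_of_sq_sub_mul_eq hR₀ (norm_nonneg _) (sq_pos_of_ne_zero hM)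
    (sub_pos.mpr (pow_lt_pow_left₀ hRs hR₀ two_ne_zero)) ?_
  rw [hQ]
  refine mul_left_cancel₀ (pow_ne_zero 2 hs.ne') ?_
  linear_combination (s ^ 2 - R ^ 2) * hd
    - (s ^ 2 - ‖eadd s (-A) O‖ ^ 2) * (∑ i, w i) ^ 2 * hgR

end HasGyrobarycentricCoords

end Gyrobarycentric

lemma sum_circumgyrocenter_weights_mul (a b c : ℝ) (k : Fin 3) :
    ∑ j, ![(a + b - c - 1) * (c - 1), (a - b + c - 1) * (b - 1), (-a + b + c - 1) * (a - 1)] j *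
      !![1, a, b; a, 1, c; b, c, 1] j k =
    (a + b - c - 1) * (c - 1) + (a - b + c - 1) * (b - 1) * a + (-a + b + c - 1) * (a - 1) * b := by
  fin_cases k <;>
    simp only [Fin.sum_univ_three, Fin.isValue, Fin.zero_eta, Fin.mk_one, Fin.reduceFinMk,
      Matrix.of_apply, Matrix.cons_val', Matrix.cons_val, Matrix.cons_val_zero,
      Matrix.cons_val_one, Matrix.cons_val_fin_one] <;>
    ring

theorem gyrocircle_interior_exterior_general {n : ℕ} (s : ℝ)
    (A1 A2 A3 O A : EuclideanSpace ℝ (Fin n))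
    (hA1 : ‖A1‖ < s) (hA2 : ‖A2‖ < s) (hA3 : ‖A3‖ < s)
    (γ12 γ13 γ23 m1 m2 m3 D R : ℝ)
    (hγ12 : γ12 = egamma s (eadd s (-A1) A2))
    (hγ13 : γ13 = egamma s (eadd s (-A1) A3))
    (hγ23 : γ23 = egamma s (eadd s (-A2) A3))
    (hm1 : m1 = (γ12 + γ13 - γ23 - 1) * (γ23 - 1))
    (hm2 : m2 = (γ12 - γ13 + γ23 - 1) * (γ13 - 1))
    (hm3 : m3 = (-γ12 + γ13 + γ23 - 1) * (γ12 - 1))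
    (hD : D = m1 * egamma s A1 + m2 * egamma s A2 + m3 * egamma s A3)
    (hDne : D ≠ 0)
    (hO : O = D⁻¹ • ((m1 * egamma s A1) • A1 + (m2 * egamma s A2) • A2 +
      (m3 * egamma s A3) • A3))
    (hOball : ‖O‖ < s)
    (hR : R = ‖eadd s (-A1) O‖)
    (w1 w2 w3 M W K : ℝ)
    (hM : M = w1 + w2 + w3) (hMne : M ≠ 0)
    (hW : W = w1 * egamma s A1 + w2 * egamma s A2 + w3 * egamma s A3)
    (hWne : W ≠ 0)
    (hA : A = W⁻¹ • ((w1 * egamma s A1) • A1 + (w2 * egamma s A2) • A2 +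
      (w3 * egamma s A3) • A3))
    (hAball : ‖A‖ < s)
    (hK : K = w1 * w2 * (γ12 - 1) + w1 * w3 * (γ13 - 1) + w2 * w3 * (γ23 - 1)) :
    (‖eadd s (-A) O‖ = R ↔ K = 0) ∧
    (‖eadd s (-A) O‖ < R ↔ K > 0) ∧
    (‖eadd s (-A) O‖ > R ↔ K < 0) := by
  set p := ![A1, A2, A3]
  have hp : ∀ i, ‖p i‖ < s := fun i => by fin_cases i <;> assumption
  have hΓ : ∀ i j, egamma s (eadd s (-p i) (p j)) =
      !![1, γ12, γ13; γ12, 1, γ23; γ13, γ23, 1] i j := by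
    intro i j
    fin_cases i <;> fin_cases j <;>
      simp [p, ← hγ12, ← hγ13, ← hγ23, egamma_eadd_neg_self, egamma_eadd_neg_comm hA2 hA1,
        egamma_eadd_neg_comm hA3 hA1, egamma_eadd_neg_comm hA3 hA2, hA1, hA2, hA3]
  have hOc : HasGyrobarycentricCoords s p ![m1, m2, m3] O := by
    simp [HasGyrobarycentricCoords, Fin.sum_univ_three, p, ← hD, hO, smul_smul, hDne]
  have hAc : HasGyrobarycentricCoords s p ![w1, w2, w3] A := by
    simp [HasGyrobarycentricCoords, Fin.sum_univ_three, p, ← hW, hA, smul_smul, hWne]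
  have hequi : ∀ i, ‖eadd s (-p i) O‖ = R := fun i => by
    refine hR ▸ hOc.norm_eadd_neg_eq_of_forall_sum_eq hp hOball ?_
      (S := m1 + m2 * γ12 + m3 * γ13) (fun k => ?_) i 0
    · simpa [Fin.sum_univ_three, p, ← hD]
    · simp only [hΓ, hm1, hm2, hm3]
      exact sum_circumgyrocenter_weights_mul γ12 γ13 γ23 k
  have hsign := hAc.sign_sub_norm_eadd_neg hp hAball hOball
    (by simpa [Fin.sum_univ_three, ← hM]) hequi
  have hK2 : ∑ i, ∑ j, ![w1, w2, w3] i * ![w1, w2, w3] j * (egamma s (eadd s (-p i) (p j)) - 1)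
      = 2 * K := by
    simp only [Fin.sum_univ_three, hΓ, hK, Fin.isValue, Matrix.of_apply, Matrix.cons_val',
      Matrix.cons_val, Matrix.cons_val_zero, Matrix.cons_val_one, Matrix.cons_val_fin_one]
    ring
  rw [hK2, sign_mul, sign_pos two_pos, one_mul] at hsign
  exact eq_iff_and_lt_iff_and_gt_iff_of_sign_sub_eq hsign

/-- **Gyrocircle interior, exterior and membership criterion.** -/
theorem gyrocircle_interior_exterior {n : ℕ} (hn : 2 ≤ n) (s : ℝ) (hs : 0 < s)
    (A1 A2 A3 O A : EuclideanSpace ℝ (Fin n))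
    (hA1 : ‖A1‖ < s) (hA2 : ‖A2‖ < s) (hA3 : ‖A3‖ < s)
    (h12 : A1 ≠ A2) (h13 : A1 ≠ A3) (h23 : A2 ≠ A3)
    (hncol : ¬ Collinear ℝ ({A1, A2, A3} : Set (EuclideanSpace ℝ (Fin n))))
    (γ12 γ13 γ23 m1 m2 m3 D R : ℝ)
    (hγ12 : γ12 = egamma s (eadd s (-A1) A2))
    (hγ13 : γ13 = egamma s (eadd s (-A1) A3))
    (hγ23 : γ23 = egamma s (eadd s (-A2) A3))
    (hm1 : m1 = (γ12 + γ13 - γ23 - 1) * (γ23 - 1))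
    (hm2 : m2 = (γ12 - γ13 + γ23 - 1) * (γ13 - 1))
    (hm3 : m3 = (-γ12 + γ13 + γ23 - 1) * (γ12 - 1))
    (hD : D = m1 * egamma s A1 + m2 * egamma s A2 + m3 * egamma s A3)
    (hDne : D ≠ 0)
    (hO : O = D⁻¹ • ((m1 * egamma s A1) • A1 + (m2 * egamma s A2) • A2 +
      (m3 * egamma s A3) • A3))
    (hOball : ‖O‖ < s)
    (hR : R = ‖eadd s (-A1) O‖)
    (w1 w2 w3 M W K : ℝ)
    (hM : M = w1 + w2 + w3) (hMne : M ≠ 0)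
    (hW : W = w1 * egamma s A1 + w2 * egamma s A2 + w3 * egamma s A3)
    (hWne : W ≠ 0)
    (hA : A = W⁻¹ • ((w1 * egamma s A1) • A1 + (w2 * egamma s A2) • A2 +
      (w3 * egamma s A3) • A3))
    (hAball : ‖A‖ < s)
    (hK : K = w1 * w2 * (γ12 - 1) + w1 * w3 * (γ13 - 1) + w2 * w3 * (γ23 - 1)) :
    (‖eadd s (-A) O‖ = R ↔ K = 0) ∧
    (‖eadd s (-A) O‖ < R ↔ K > 0) ∧
    (‖eadd s (-A) O‖ > R ↔ K < 0) :=
  gyrocircle_interior_exterior_general s A1 A2 A3 O A hA1 hA2 hA3 γ12 γ13 γ23 m1 m2 m3 D R hγ12 hγ13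
    hγ23 hm1 hm2 hm3 hD hDne hO hOball hR w1 w2 w3 M W K hM hMne hW hWne hA hAball hK
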